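/- arXiv:0904.0973 — 3 statements merged into one kernel-verified Lean document; each statement's English description precedes it below -/
import Mathlib

section
/- There exists an optimal computer, i.e., a computer U such that for each computer C there exists d ∈ ℕ with the property that for every p ∈ Dom C there exists a finite binary string q with U(q) = C(p) and |q| ≤ |p| + d. -/
open Filter Topology

/-- A set of finite binary strings is prefix-free if no string in it is a
proper prefix of another string in it. -/
def PrefixFree (S : Set (List Bool)) : Prop :=
  ∀ p ∈ S, ∀ q ∈ S, p <+: q → p = q

/-- A computer: a partial recursive function from finite binary strings to
finite binary strings whose domain is a nonempty prefix-free set. -/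
structure Computer where
  f : List Bool →. List Bool
  partrec : Partrec f
  dom_nonempty : f.Dom.Nonempty
  dom_prefixFree : PrefixFree f.Dom

/-- A computer `U` is optimal if for each computer `C` there is `d ∈ ℕ` such
that every `p ∈ Dom C` admits `q` with `U(q) = C(p)` and `|q| ≤ |p| + d`. -/
def Optimal (U : Computer) : Prop :=
  ∀ C : Computer, ∃ d : ℕ, ∀ p ∈ C.f.Dom,
    ∃ q : List Bool, U.f q = C.f p ∧ q.length ≤ p.length + d

/-- `H_C(s)`: the length of a shortest program for `C` printing `s`. -/
noncomputable def complexity (C : Computer) (s : List Bool) : ℕ :=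
  sInf {n | ∃ p : List Bool, s ∈ C.f p ∧ p.length = n}

/-- The `i`-th bit (for `i = 0, 1, 2, …`) of the base-two expansion of
`α - ⌊α⌋` with infinitely many zeros. -/
noncomputable def bitOf (α : ℝ) (i : ℕ) : Bool :=
  decide (⌊(α - ⌊α⌋) * 2 ^ (i + 1)⌋ % 2 = 1)

/-- `α↾n`: the first `n` bits of the base-two expansion of `α - ⌊α⌋`
with infinitely many zeros. -/
noncomputable def firstBits (α : ℝ) (n : ℕ) : List Bool :=
  (List.range n).map (bitOf α)

/-- A real `α` is computable if some total recursive `f : ℕ⁺ → ℚ` satisfies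
`|α - f n| < 1/n` for all `n ≥ 1`. -/
def ComputableReal (α : ℝ) : Prop :=
  ∃ f : ℕ → ℚ, Computable f ∧ ∀ n : ℕ, 0 < n → |α - (f n : ℝ)| < 1 / n

/-- `α` is weakly Chaitin `T`-random (w.r.t. the computer `U`). -/
def WeaklyChaitinTRandom (U : Computer) (T α : ℝ) : Prop :=
  ∃ c : ℕ, ∀ n : ℕ, 0 < n → T * n - c ≤ (complexity U (firstBits α n) : ℝ)

/-- `α` is Chaitin `T`-random (w.r.t. the computer `U`). -/
def ChaitinTRandom (U : Computer) (T α : ℝ) : Prop :=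
  Tendsto (fun n : ℕ => (complexity U (firstBits α n) : ℝ) - T * n) atTop atTop

/-- `α` is `T`-compressible (w.r.t. the computer `U`): `H(α↾n) ≤ Tn + o(n)`. -/
def TCompressible (U : Computer) (T α : ℝ) : Prop :=
  ∃ g : ℕ → ℝ, Tendsto (fun n : ℕ => g n / n) atTop (nhds 0) ∧
    ∀ n : ℕ, 0 < n → (complexity U (firstBits α n) : ℝ) ≤ T * n + g n

/-- The Boltzmann factor `2^(-|p|/T)` of a program `p`. -/
noncomputable def boltzmann (T : ℝ) (p : List Bool) : ℝ :=
  (2 : ℝ) ^ (-(p.length : ℝ) / T)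

/-- Partition function `Z_C(T) = Σ_{p ∈ Dom C} 2^(-|p|/T)`. -/
noncomputable def Zfun (C : Computer) (T : ℝ) : ℝ :=
  ∑' p : C.f.Dom, boltzmann T p.1

/-- Free energy `F_C(T) = -T log₂ Z_C(T)`. -/
noncomputable def Ffun (C : Computer) (T : ℝ) : ℝ :=
  -T * Real.logb 2 (Zfun C T)

/-- Energy `E_C(T) = Z_C(T)⁻¹ Σ_{p ∈ Dom C} |p| 2^(-|p|/T)`. -/
noncomputable def Efun (C : Computer) (T : ℝ) : ℝ :=
  (Zfun C T)⁻¹ * ∑' p : C.f.Dom, (p.1.length : ℝ) * boltzmann T p.1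

/-- Statistical mechanical entropy `S_C(T) = (E_C(T) - F_C(T))/T`. -/
noncomputable def Sfun (C : Computer) (T : ℝ) : ℝ :=
  (Efun C T - Ffun C T) / T

/-- `𝒵(V)`: the set of `T ∈ (0,1)` with `Z_V(T)` computable. -/
def setZ (V : Computer) : Set ℝ := {T | T ∈ Set.Ioo 0 1 ∧ ComputableReal (Zfun V T)}

/-- `ℱ(V)`: the set of `T ∈ (0,1)` with `F_V(T)` computable. -/
def setF (V : Computer) : Set ℝ := {T | T ∈ Set.Ioo 0 1 ∧ ComputableReal (Ffun V T)}

/-- `ℰ(V)`: the set of `T ∈ (0,1)` with `E_V(T)` computable. -/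
def setE (V : Computer) : Set ℝ := {T | T ∈ Set.Ioo 0 1 ∧ ComputableReal (Efun V T)}

/-- `𝒮(V)`: the set of `T ∈ (0,1)` with `S_V(T)` computable. -/
def setS (V : Computer) : Set ℝ := {T | T ∈ Set.Ioo 0 1 ∧ ComputableReal (Sfun V T)}

/-- `FP_w` (w.r.t. the optimal computer `U` fixing `H`): the set of `T ∈ (0,1)`
that are weakly Chaitin `T`-random and `T`-compressible. -/
def FPw (U : Computer) : Set ℝ :=
  {T | T ∈ Set.Ioo 0 1 ∧ WeaklyChaitinTRandom U T T ∧ TCompressible U T T}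

/-- `FP` (w.r.t. the optimal computer `U` fixing `H`): the set of `T ∈ (0,1)`
that are Chaitin `T`-random and `T`-compressible. -/
def FP (U : Computer) : Set ℝ :=
  {T | T ∈ Set.Ioo 0 1 ∧ ChaitinTRandom U T T ∧ TCompressible U T T}

/-- A computer is physically reasonable if its domain contains two strings of
different lengths. -/
def PhysicallyReasonable (C : Computer) : Prop :=
  ∃ p ∈ C.f.Dom, ∃ q ∈ C.f.Dom, p.length ≠ q.length

/-- A computable measure machine: `Z_C(1)` is a computable real. -/
def ComputableMeasureMachine (C : Computer) : Prop :=
  ComputableReal (Zfun C 1)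

/-- `D` is the composition `C₀ ⊘ C₁ ⊘ ⋯ ⊘ C_{N-1}`: its domain consists of the
concatenations `p₀p₁⋯p_{N-1}` with each `pᵢ ∈ Dom Cᵢ`, and on such a
concatenation it returns `C₀(p₀)`. -/
def IsComposition {N : ℕ} (C : Fin N → Computer) (hN : 0 < N) (D : Computer) : Prop :=
  (∀ l, l ∈ D.f.Dom ↔
      ∃ ps : Fin N → List Bool, (∀ i, ps i ∈ (C i).f.Dom) ∧ l = (List.ofFn ps).flatten) ∧
  (∀ ps : Fin N → List Bool, (∀ i, ps i ∈ (C i).f.Dom) →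
      D.f ((List.ofFn ps).flatten) = (C ⟨0, hN⟩).f (ps ⟨0, hN⟩))

/-- A sequence of computers is recursive if a single partial recursive function
uniformly computes all of them. -/
def RecursiveSeq (V : ℕ → Computer) : Prop :=
  ∃ F : ℕ × List Bool →. List Bool, Partrec F ∧ ∀ n p, (V n).f p = F (n, p)

/-
Every code `c` of a partial recursive function yields a machine with prefix-free domain: run `c`
in stages and accept an input `p` at stage `s` only if within `s` steps `c` has halted on `p` but
on no other string comparable with `p`. Of two comparable inputs, the one accepted later would
have seen the other, so the domain is prefix-free; and if the domain of `c` is already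
prefix-free, no input is ever rejected, so the machine computes the same function as `c`. The
universal computer reads an index `n` in unary, `0ⁿ1`, and runs the machine of the `n`-th code
on the rest of its input, so a program `p` of a computer with code `c` costs `|p| + c + 1` bits.
-/

namespace OptimalComputer

open Nat.Partrec (Code)
open Nat.Partrec.Code
open Encodable
open Denumerable (ofNat)

def Computes (c : Code) (f : List Bool →. List Bool) : Prop :=
  ∀ p, eval c (encode p) = (f p).map encode

theorem exists_code_computes {f : List Bool →. List Bool} (hf : Partrec f) :
    ∃ c, Computes c f := by
  obtain ⟨c, hc⟩ := Nat.Partrec.Code.exists_code.1 hf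
  exact ⟨c, fun p => by simp [hc, encodek]⟩

theorem Computes.mem_dom_of_mem_evaln {c : Code} {f : List Bool →. List Bool} (hc : Computes c f)
    {s : ℕ} {p : List Bool} {x : ℕ} (h : x ∈ evaln s c (encode p)) : p ∈ f.Dom := by
  have hx := evaln_sound h
  rw [hc p, Part.mem_map_iff] at hx
  obtain ⟨a, ha, -⟩ := hx
  exact Part.dom_iff_mem.2 ⟨a, ha⟩

-- `evaln s` halts only on inputs below `s`, so inspecting strings with code below `s` suffices.
def NoComparableHalts (c : Code) (s : ℕ) (p : List Bool) : Prop :=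
  ∀ q ∈ (List.range s).filterMap (decode (α := List Bool)), q ≠ p → q <+: p ∨ p <+: q →
    evaln s c (encode q) = none

instance (c : Code) (s : ℕ) (p : List Bool) : Decidable (NoComparableHalts c s p) := by
  unfold NoComparableHalts; infer_instance

def acceptStage (c : Code) (p : List Bool) (s : ℕ) : Option (List Bool) :=
  if NoComparableHalts c s p then (evaln s c (encode p)).bind decode else none

def prefixFreeEval (c : Code) : List Bool →. List Bool :=
  fun p => Nat.rfindOpt (acceptStage c p)

theorem mem_acceptStage {c : Code} {p a : List Bool} {s : ℕ} (h : a ∈ acceptStage c p s) :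
    NoComparableHalts c s p ∧ ∃ r, evaln s c (encode p) = some r ∧ decode r = some a := by
  unfold acceptStage at h
  split_ifs at h with hs
  · exact ⟨hs, Option.bind_eq_some_iff.1 h⟩
  · simp at h

theorem eq_of_mem_acceptStage_of_le {c : Code} {p q a b : List Bool} {s₁ s₂ : ℕ}
    (hp : a ∈ acceptStage c p s₁) (hq : b ∈ acceptStage c q s₂) (hs : s₁ ≤ s₂)
    (hpq : p <+: q ∨ q <+: p) : p = q := by
  by_contra hne
  obtain ⟨-, r, hr, -⟩ := mem_acceptStage hp
  have hr₂ := evaln_mono hs hr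
  have hp₂ : p ∈ (List.range s₂).filterMap decode :=
    List.mem_filterMap.2 ⟨encode p, List.mem_range.2 (evaln_bound hr₂), encodek p⟩
  simp [(mem_acceptStage hq).1 p hp₂ hne hpq] at hr₂

theorem prefixFreeEval_dom_prefixFree (c : Code) : PrefixFree (prefixFreeEval c).Dom := by
  intro p hp q hq hpq
  obtain ⟨a, ha⟩ := Part.dom_iff_mem.1 hp
  obtain ⟨b, hb⟩ := Part.dom_iff_mem.1 hq
  obtain ⟨s₁, hs₁⟩ := Nat.rfindOpt_spec ha
  obtain ⟨s₂, hs₂⟩ := Nat.rfindOpt_spec hb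
  rcases le_total s₁ s₂ with hs | hs
  · exact eq_of_mem_acceptStage_of_le hs₁ hs₂ hs (.inl hpq)
  · exact (eq_of_mem_acceptStage_of_le hs₂ hs₁ hs (.inr hpq)).symm

theorem mem_of_mem_prefixFreeEval {c : Code} {f : List Bool →. List Bool} (hc : Computes c f)
    {p a : List Bool} (h : a ∈ prefixFreeEval c p) : a ∈ f p := by
  obtain ⟨s, hs⟩ := Nat.rfindOpt_spec h
  obtain ⟨-, r, hr, hra⟩ := mem_acceptStage hs
  have := evaln_sound hr
  rw [hc p, Part.mem_map_iff] at this
  obtain ⟨b, hb, rfl⟩ := this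
  rw [encodek, Option.some_inj] at hra
  exact hra ▸ hb

theorem prefixFreeEval_eq {c : Code} {f : List Bool →. List Bool} (hc : Computes c f)
    (hf : PrefixFree f.Dom) : prefixFreeEval c = f := by
  funext p
  refine Part.ext fun a => ⟨mem_of_mem_prefixFreeEval hc, fun ha => ?_⟩
  obtain ⟨k, hk⟩ := evaln_complete.1 (hc p ▸ Part.mem_map encode ha)
  have haccept : a ∈ acceptStage c p k := by
    rw [acceptStage, if_pos]
    · simp [Option.mem_def.1 hk]
    · intro q _ hqp hcomp
      by_contra hq
      obtain ⟨x, hx⟩ := Option.ne_none_iff_exists'.1 hq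
      have hqf := hc.mem_dom_of_mem_evaln hx
      have hpf : p ∈ f.Dom := Part.dom_iff_mem.2 ⟨a, ha⟩
      rcases hcomp with h | h
      · exact hqp (hf q hqf p hpf h)
      · exact hqp (hf p hpf q hqf h).symm
  obtain ⟨b, hb⟩ := Part.dom_iff_mem.1 (Nat.rfindOpt_dom.2 ⟨k, a, haccept⟩)
  obtain rfl := Part.mem_unique ha (mem_of_mem_prefixFreeEval hc hb)
  exact hb

section

open Primrec

theorem primrecRel_isPrefix : PrimrecRel fun p q : List Bool => p <+: q :=
  (Primrec.eq.comp fst (list_take.comp (list_length.comp fst) snd)).of_eq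
    fun _ => List.prefix_iff_eq_take.symm

theorem acceptStage_primrec :
    Primrec fun x : (Code × List Bool) × ℕ => acceptStage x.1.1 x.1.2 x.2 := by
  have hrival : PrimrecRel fun (q : List Bool) (x : (Code × List Bool) × ℕ) =>
      q ≠ x.1.2 → q <+: x.1.2 ∨ x.1.2 <+: q → evaln x.2 x.1.1 (encode q) = none := by
    have hp : Primrec fun y : List Bool × (Code × List Bool) × ℕ => y.2.1.2 :=
      snd.comp (fst.comp snd)
    have hhalt : PrimrecPred fun y : List Bool × (Code × List Bool) × ℕ =>
        evaln y.2.2 y.2.1.1 (encode y.1) = none :=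
      Primrec.eq.comp (primrec_evaln.comp (((snd.comp snd).pair (fst.comp (fst.comp snd))).pair
        (Primrec.encode.comp fst))) (const none)
    refine ((Primrec.eq.comp fst hp).or
      (((primrecRel_isPrefix.comp fst hp).or (primrecRel_isPrefix.comp hp fst)).not.or hhalt)).of_eq
        fun _ => ?_
    tauto
  have hfree : PrimrecPred fun x : (Code × List Bool) × ℕ => NoComparableHalts x.1.1 x.2 x.1.2 :=
    (PrimrecRel.forall_mem_list hrival).comp
      (listFilterMap (list_range.comp snd) (Primrec.decode.comp snd).to₂) Primrec.id
  refine Primrec.ite hfree ?_ (const none)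
  exact option_bind (primrec_evaln.comp ((snd.pair (fst.comp fst)).pair
    (Primrec.encode.comp (snd.comp fst)))) (Primrec.decode.comp snd).to₂

end

theorem prefixFreeEval_partrec : Partrec₂ prefixFreeEval :=
  Partrec.rfindOpt acceptStage_primrec.to_comp

def selfDelimit (n : ℕ) (p : List Bool) : List Bool :=
  List.replicate n false ++ true :: p

def splitIndex : List Bool → Option (ℕ × List Bool)
  | [] => none
  | b :: q => cond b (some (0, q)) ((splitIndex q).map fun x => (x.1 + 1, x.2))

theorem splitIndex_eq_some_iff {q p : List Bool} {n : ℕ} :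
    splitIndex q = some (n, p) ↔ q = selfDelimit n p := by
  induction q generalizing n with
  | nil => simp [splitIndex, selfDelimit]
  | cons b q ih =>
    cases b <;> cases n <;> simp [splitIndex, selfDelimit, List.replicate_succ, ih, eq_comm]

theorem selfDelimit_prefix_selfDelimit {m n : ℕ} {p q : List Bool}
    (h : selfDelimit m p <+: selfDelimit n q) : m = n ∧ p <+: q := by
  induction m generalizing n with
  | zero => cases n <;> simp_all [selfDelimit, List.replicate_succ]
  | succ m ih =>
    cases n with
    | zero => simp [selfDelimit, List.replicate_succ] at h
    | succ n =>
      obtain ⟨rfl, hpq⟩ := ih (by simpa [selfDelimit, List.replicate_succ] using h)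
      exact ⟨rfl, hpq⟩

open Primrec in
theorem splitIndex_primrec : Primrec splitIndex := by
  refine (Primrec.list_rec Primrec.id (Primrec.const none)
    (show Primrec₂ fun (_ : List Bool) (x : Bool × List Bool × Option (ℕ × List Bool)) =>
        cond x.1 (some (0, x.2.1)) (x.2.2.map fun y => (y.1 + 1, y.2)) from ?_)).of_eq
    fun q => ?_
  · exact Primrec.cond (fst.comp snd) (option_some.comp ((const 0).pair (fst.comp (snd.comp snd))))
      (option_map (snd.comp (snd.comp snd)) ((succ.comp (fst.comp snd)).pair (snd.comp snd)).to₂)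
  · induction q with
    | nil => rfl
    | cons b q ih => simp [splitIndex, ← ih]

def universal : List Bool →. List Bool := fun q =>
  (splitIndex q : Part (ℕ × List Bool)).bind fun x => prefixFreeEval (ofNat Code x.1) x.2

theorem universal_selfDelimit (n : ℕ) (p : List Bool) :
    universal (selfDelimit n p) = prefixFreeEval (ofNat Code n) p := by
  simp [universal, splitIndex_eq_some_iff.2 rfl]

theorem exists_eq_selfDelimit_of_mem_dom {q : List Bool} (hq : q ∈ universal.Dom) :
    ∃ n p, q = selfDelimit n p ∧ p ∈ (prefixFreeEval (ofNat Code n)).Dom := by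
  cases hs : splitIndex q with
  | none => simp [PFun.mem_dom, universal, hs] at hq
  | some x =>
    obtain ⟨n, p⟩ := x
    obtain rfl := splitIndex_eq_some_iff.1 hs
    rw [PFun.mem_dom, universal_selfDelimit] at hq
    exact ⟨n, p, rfl, (PFun.mem_dom _ _).2 hq⟩

theorem universal_dom_prefixFree : PrefixFree universal.Dom := by
  intro q₁ hq₁ q₂ hq₂ h
  obtain ⟨n₁, p₁, rfl, hp₁⟩ := exists_eq_selfDelimit_of_mem_dom hq₁
  obtain ⟨n₂, p₂, rfl, hp₂⟩ := exists_eq_selfDelimit_of_mem_dom hq₂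
  obtain ⟨rfl, hp⟩ := selfDelimit_prefix_selfDelimit h
  rw [prefixFreeEval_dom_prefixFree _ p₁ hp₁ p₂ hp₂ hp]

theorem universal_dom_nonempty : universal.Dom.Nonempty := by
  refine ⟨selfDelimit (encode Code.zero) [], ?_⟩
  show (universal _).Dom
  rw [universal_selfDelimit, Denumerable.ofNat_encode]
  -- `Code.zero` halts on every input, but at stage 1 only `[]` has a code below 1.
  exact Nat.rfindOpt_dom.2 ⟨1, [], by simp [acceptStage, NoComparableHalts, evaln]⟩

theorem universal_partrec : Partrec universal :=
  (Computable.ofOption splitIndex_primrec.to_comp).bind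
    (prefixFreeEval_partrec.comp
      ((Primrec.ofNat Code).to_comp.comp (Computable.fst.comp Computable.snd))
      (Computable.snd.comp Computable.snd)).to₂

def universalComputer : Computer :=
  ⟨universal, universal_partrec, universal_dom_nonempty, universal_dom_prefixFree⟩

end OptimalComputer

/-- There exists an optimal computer. -/
theorem exists_optimal_computer : ∃ U : Computer, Optimal U := by
  open OptimalComputer in
  refine ⟨universalComputer, fun C => ?_⟩
  obtain ⟨c, hc⟩ := exists_code_computes C.partrec
  refine ⟨Encodable.encode c + 1, fun p _ => ⟨selfDelimit (Encodable.encode c) p, ?_, ?_⟩⟩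
  · show universal _ = _
    rw [universal_selfDelimit, Denumerable.ofNat_encode, prefixFreeEval_eq hc C.dom_prefixFree]
  · simp only [selfDelimit, List.length_append, List.length_replicate, List.length_cons]
    omega
end

section
/- Let V be an optimal computer and let T be a real with T > 1. Then the series Σ_{p ∈ Dom V} 2^{−|p|/T} diverges to ∞ (for any enumeration p₁, p₂, … of Dom V the partial sums Z_k(T) = Σ_{i=1}^k 2^{−|p_i|/T} tend to ∞), and the partial free energies F_k(T) = −T log₂ Z_k(T) tend to −∞. -/
open Filter Topology

/-!
An optimal computer `V` simulates, with a constant overhead `d` in program length, the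
computer that accepts exactly the words `1ʲ 0 s` with `|s| = 2ʲ` and prints its input.
So `V` has `2^(2ʲ)` programs with pairwise distinct outputs, each of length at most
`2ʲ + j + 1 + d`. For `T > 1` their Boltzmann weights add up to at least
`2^(((T - 1) 2ʲ - j - 1 - d) / T)`, which is unbounded in `j`; hence the family of
Boltzmann weights over `Dom V` is not summable, and its partial sums along any
enumeration tend to `∞`.
-/

lemma boltzmann_pos (T : ℝ) (p : List Bool) : 0 < boltzmann T p :=
  Real.rpow_pos_of_pos two_pos _

lemma boltzmann_le_rpow_mul_boltzmann {T : ℝ} (hT : 0 < T) {p q : List Bool} {d : ℕ}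
    (h : q.length ≤ p.length + d) :
    boltzmann T p ≤ 2 ^ ((d : ℝ) / T) * boltzmann T q := by
  rw [boltzmann, boltzmann, ← Real.rpow_add two_pos]
  refine Real.rpow_le_rpow_of_exponent_le one_le_two ?_
  rw [← add_div, div_le_div_iff_of_pos_right hT]
  have : (q.length : ℝ) ≤ p.length + d := by exact_mod_cast h
  linarith

/-- `V` simulates `C` with length overhead `d`, so each Boltzmann weight of `C` is at most
`2^(d/T)` times a weight of `V`, and injectivity of `C` makes these weights of `V` distinct. -/
theorem Optimal.summable_boltzmann_of_injective {V C : Computer} (hV : Optimal V)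
    (hC : ∀ p p' y, y ∈ C.f p → y ∈ C.f p' → p = p') {T : ℝ} (hT : 0 < T)
    (h : Summable fun q : V.f.Dom => boltzmann T q) :
    Summable fun p : C.f.Dom => boltzmann T p := by
  obtain ⟨d, hd⟩ := hV C
  have hsim : ∀ p : C.f.Dom,
      ∃ q : V.f.Dom, V.f q = C.f p ∧ q.1.length ≤ p.1.length + d := by
    intro p
    obtain ⟨q, hq, hlen⟩ := hd p p.2
    exact ⟨⟨q, show (V.f q).Dom by rw [hq]; exact p.2⟩, hq, hlen⟩
  choose q hq hlen using hsim
  have hinj : Function.Injective q := by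
    intro p p' hpp'
    obtain ⟨y, hy⟩ := Part.dom_iff_mem.mp p.2
    have hy' : y ∈ C.f p' := by rw [← hq p', ← hpp', hq p]; exact hy
    exact Subtype.ext (hC _ _ _ hy hy')
  exact Summable.of_nonneg_of_le (fun p => (boltzmann_pos T p).le)
    (fun p => boltzmann_le_rpow_mul_boltzmann hT (hlen p)) ((h.comp_injective hinj).mul_left _)

/-- The words `1ʲ 0 s` with `|s| = 2ʲ`. -/
def IsCodeword (l : List Bool) : Prop :=
  l.length = l.idxOf false + 1 + 2 ^ l.idxOf false

instance : DecidablePred IsCodeword := fun _ => inferInstanceAs (Decidable (_ = _))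

lemma primrecPred_isCodeword : PrimrecPred IsCodeword := by
  have hidx : Primrec fun l : List Bool => l.idxOf false :=
    Primrec.list_idxOf.comp (.const false) .id
  have hpow : Primrec₂ ((· ^ ·) : ℕ → ℕ → ℕ) := Primrec₂.unpaired'.1 Nat.Primrec.pow
  exact Primrec.eq.comp Primrec.list_length
    (Primrec.nat_add.comp (Primrec.nat_add.comp hidx (.const 1)) (hpow.comp (.const 2) hidx))

lemma prefixFree_isCodeword : PrefixFree {l | IsCodeword l} := by
  intro l (hl : IsCodeword l) l' (hl' : IsCodeword l') hpre
  unfold IsCodeword at hl hl'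
  have hmem : false ∈ l := by
    by_contra hfalse
    have : l.idxOf false = l.length := List.idxOf_eq_length_iff.mpr hfalse
    grind
  have hidx : l'.idxOf false = l.idxOf false := by
    obtain ⟨r, rfl⟩ := hpre
    exact List.idxOf_append_of_mem hmem
  exact hpre.eq_of_length (by rw [hl, hl', hidx])

def codeword (j : ℕ) (s : Fin (2 ^ j) → Bool) : List Bool :=
  List.replicate j true ++ false :: List.ofFn s

lemma length_codeword (j : ℕ) (s : Fin (2 ^ j) → Bool) :
    (codeword j s).length = j + 1 + 2 ^ j := by
  simp [codeword, Nat.add_assoc, Nat.add_comm 1]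

lemma idxOf_codeword (j : ℕ) (s : Fin (2 ^ j) → Bool) : (codeword j s).idxOf false = j := by
  rw [codeword, List.idxOf_append_of_notMem (by simp)]
  simp

lemma isCodeword_codeword (j : ℕ) (s : Fin (2 ^ j) → Bool) : IsCodeword (codeword j s) := by
  rw [IsCodeword, idxOf_codeword, length_codeword]

lemma codeword_injective (j : ℕ) : Function.Injective (codeword j) := by
  intro s s' h
  exact List.ofFn_injective (List.cons_injective (List.append_cancel_left h))

def codewordComputer : Computer where
  f l := ((if IsCodeword l then some l else none : Option (List Bool)) : Part (List Bool))
  partrec := Computable.ofOption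
    (Primrec.ite primrecPred_isCodeword .option_some (.const none)).to_comp
  dom_nonempty := ⟨codeword 0 ![false], by simp [isCodeword_codeword]⟩
  dom_prefixFree := by
    convert prefixFree_isCodeword using 1
    ext l
    simp [PFun.Dom]

lemma mem_codewordComputer {l y : List Bool} :
    y ∈ codewordComputer.f l ↔ IsCodeword l ∧ l = y := by
  simp [codewordComputer]

lemma tendsto_mul_two_pow_sub_atTop {c : ℝ} (hc : 0 < c) :
    Tendsto (fun j : ℕ => c * 2 ^ j - (j + 1)) atTop atTop := by
  have hlin : (fun j : ℕ => (j : ℝ) + 1) =o[atTop] fun j => (2 : ℝ) ^ j :=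
    (isLittleO_coe_const_pow_of_one_lt one_lt_two).add
      ((Asymptotics.isLittleO_one_left_iff ℝ).mpr (by
        simpa using tendsto_pow_atTop_atTop_of_one_lt one_lt_two))
  refine tendsto_atTop_mono' _ ?_ ((tendsto_pow_atTop_atTop_of_one_lt one_lt_two).const_mul_atTop
    (half_pos hc))
  filter_upwards [hlin.def (half_pos hc)] with j hj
  simp only [Real.norm_eq_abs, abs_of_nonneg (by positivity : (0 : ℝ) ≤ j + 1),
    abs_of_nonneg (by positivity : (0 : ℝ) ≤ 2 ^ j)] at hj
  linarith

lemma sum_boltzmann_codeword {T : ℝ} (hT : T ≠ 0) (j : ℕ) :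
    ∑ s, boltzmann T (codeword j s) = 2 ^ (((T - 1) * 2 ^ j - (j + 1)) / T) := by
  simp only [boltzmann, length_codeword, Finset.sum_const, Finset.card_univ, Fintype.card_fun,
    Fintype.card_bool, Fintype.card_fin, nsmul_eq_mul]
  rw [Nat.cast_pow, Nat.cast_ofNat, ← Real.rpow_natCast, ← Real.rpow_add two_pos]
  congr 1
  push_cast
  field_simp
  ring

lemma tendsto_sum_boltzmann_codeword {T : ℝ} (hT : 1 < T) :
    Tendsto (fun j => ∑ s, boltzmann T (codeword j s)) atTop atTop := by
  simp only [sum_boltzmann_codeword (by positivity : T ≠ 0)]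
  exact (tendsto_rpow_atTop_of_base_gt_one 2 one_lt_two).comp
    ((tendsto_mul_two_pow_sub_atTop (sub_pos.mpr hT)).atTop_div_const (by linarith))

lemma not_summable_boltzmann_codewordComputer {T : ℝ} (hT : 1 < T) :
    ¬ Summable fun l : codewordComputer.f.Dom => boltzmann T l := by
  intro h
  have hdom : ∀ j s, codeword j s ∈ codewordComputer.f.Dom := fun j s =>
    (PFun.mem_dom _ _).mpr ⟨_, mem_codewordComputer.mpr ⟨isCodeword_codeword j s, rfl⟩⟩
  have hbound : ∀ j,
      ∑ s, boltzmann T (codeword j s) ≤ ∑' l : codewordComputer.f.Dom, boltzmann T l := by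
    intro j
    let e : (Fin (2 ^ j) → Bool) ↪ codewordComputer.f.Dom :=
      ⟨fun s => ⟨codeword j s, hdom j s⟩,
        fun s s' hss' => codeword_injective j (congrArg Subtype.val hss')⟩
    calc ∑ s, boltzmann T (codeword j s) = ∑ l ∈ Finset.univ.map e, boltzmann T l :=
          (Finset.sum_map Finset.univ e fun l => boltzmann T l).symm
      _ ≤ _ := h.sum_le_tsum _ fun l _ => (boltzmann_pos T l).le
  obtain ⟨j, hj⟩ := ((tendsto_sum_boltzmann_codeword hT).eventually_gt_atTop
    (∑' l : codewordComputer.f.Dom, boltzmann T l)).exists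
  exact (hbound j).not_gt hj

theorem Optimal.not_summable_boltzmann {V : Computer} (hV : Optimal V) {T : ℝ} (hT : 1 < T) :
    ¬ Summable fun q : V.f.Dom => boltzmann T q := fun h =>
  not_summable_boltzmann_codewordComputer hT <|
    hV.summable_boltzmann_of_injective (fun _ _ _ hy hy' =>
      (mem_codewordComputer.mp hy).2.trans (mem_codewordComputer.mp hy').2.symm) (by linarith) h

/-- For optimal `V` and `T > 1`, for any enumeration of `Dom V`
the partial sums `Z_k(T)` tend to `∞`, and `F_k(T) = -T log₂ Z_k(T)` tend
to `-∞`. -/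
theorem partitionFunction_diverges (V : Computer) (hV : Optimal V)
    (T : ℝ) (hT : 1 < T) (p : ℕ → List Bool)
    (hinj : Function.Injective p) (hran : Set.range p = V.f.Dom) :
    Tendsto (fun k : ℕ => ∑ i ∈ Finset.range k, boltzmann T (p i)) atTop atTop ∧
    Tendsto (fun k : ℕ =>
        -T * Real.logb 2 (∑ i ∈ Finset.range k, boltzmann T (p i))) atTop atBot := by
  have hZ : ¬ Summable fun i => boltzmann T (p i) := by
    intro h
    apply hV.not_summable_boltzmann hT
    rw [← hran]
    exact (Equiv.ofInjective p hinj).summable_iff.mp h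
  have hZk : Tendsto (fun k => ∑ i ∈ Finset.range k, boltzmann T (p i)) atTop atTop :=
    (not_summable_iff_tendsto_nat_atTop_of_nonneg fun i => (boltzmann_pos T (p i)).le).mp hZ
  exact ⟨hZk, (tendsto_const_mul_atBot_of_neg (by linarith)).mpr
    ((Real.tendsto_logb_atTop one_lt_two).comp hZk)⟩
end

section
/- Let C be a physically reasonable computer. Then each of the mappings T ↦ Z_C(T), T ↦ E_C(T), and T ↦ S_C(T) is an increasing real function on the interval (0,1), and the mapping T ↦ F_C(T) is a decreasing real function on (0,1). -/
open Filter Topology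

namespace StatMechAux

open Filter Topology

/-! ### Summability infrastructure -/

noncomputable instance fintypeLenEq (n : ℕ) : Fintype {l : List Bool // l.length = n} :=
  inferInstanceAs (Fintype (List.Vector Bool n))

lemma card_len_eq (n : ℕ) : Fintype.card {l : List Bool // l.length = n} = 2 ^ n := by
  have : Fintype.card (List.Vector Bool n) = 2 ^ n := by
    rw [card_vector]; norm_num
  exact this

lemma summable_length (c : ℕ → ℝ) (hc : ∀ n, 0 ≤ c n)
    (h : Summable fun n : ℕ => (2:ℝ)^n * c n) :
    Summable (fun p : List Bool => c p.length) := by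
  have key : Summable (fun x : (Σ n : ℕ, {l : List Bool // l.length = n}) => c x.1) := by
    apply (summable_sigma_of_nonneg fun _ => hc _).mpr
    refine ⟨fun n => Summable.of_finite, ?_⟩
    apply Summable.of_nonneg_of_le (fun n => tsum_nonneg fun _ => hc _) (fun n => ?_) h
    have : ∑' _ : {l : List Bool // l.length = n}, c n
        = (Fintype.card {l : List Bool // l.length = n} : ℝ) * c n := by
      rw [tsum_eq_sum (s := Finset.univ) (by simp), Finset.sum_const, Finset.card_univ,
        nsmul_eq_mul]
    rw [this, card_len_eq]
    push_cast
    rfl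
  rw [← (Equiv.sigmaFiberEquiv (fun p : List Bool => p.length)).summable_iff]
  exact key.congr (fun x => by simp [Equiv.sigmaFiberEquiv, x.2.2])

lemma ratio_lt_one {T : ℝ} (hT0 : 0 < T) (hT1 : T < 1) :
    (2:ℝ) ^ (1 - 1/T) < 1 :=
  Real.rpow_lt_one_of_one_lt_of_neg one_lt_two
    (by rw [sub_neg]; exact (one_lt_one_div hT0 hT1))

lemma two_pow_mul (T : ℝ) (n : ℕ) :
    (2:ℝ)^n * (2:ℝ) ^ (-(n:ℝ)/T) = ((2:ℝ) ^ (1 - 1/T)) ^ n := by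
  rw [← Real.rpow_natCast ((2:ℝ) ^ (1 - 1/T)) n, ← Real.rpow_natCast (2:ℝ) n,
    ← Real.rpow_mul (by norm_num), ← Real.rpow_add two_pos]
  ring_nf

lemma summable_aux1 {T : ℝ} (hT0 : 0 < T) (hT1 : T < 1) :
    Summable fun n : ℕ => (2:ℝ)^n * ((2:ℝ) ^ (-(n:ℝ)/T)) :=
  Summable.congr (summable_geometric_of_lt_one (by positivity) (ratio_lt_one hT0 hT1))
    fun n => (two_pow_mul T n).symm

lemma summable_aux2 {T : ℝ} (hT0 : 0 < T) (hT1 : T < 1) :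
    Summable fun n : ℕ => (2:ℝ)^n * ((n:ℝ) * (2:ℝ) ^ (-(n:ℝ)/T)) := by
  have h := summable_pow_mul_geometric_of_norm_lt_one (R := ℝ) (k := 1)
    (r := (2:ℝ) ^ (1 - 1/T)) (by
      rw [Real.norm_eq_abs, abs_of_pos (by positivity)]; exact ratio_lt_one hT0 hT1)
  refine h.congr fun n => ?_
  rw [← two_pow_mul T n]
  ring

variable {C : Computer} {T T₁ T₂ : ℝ}

lemma summableZ (hT0 : 0 < T) (hT1 : T < 1) :
    Summable (fun p : C.f.Dom => boltzmann T p.1) := by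
  have := (summable_length (fun n => (2:ℝ) ^ (-(n:ℝ)/T))
    (fun n => by positivity) (summable_aux1 hT0 hT1)).subtype C.f.Dom
  exact this.congr fun p => rfl

lemma summableE (hT0 : 0 < T) (hT1 : T < 1) :
    Summable (fun p : C.f.Dom => (p.1.length : ℝ) * boltzmann T p.1) := by
  have := (summable_length (fun n => (n:ℝ) * (2:ℝ) ^ (-(n:ℝ)/T))
    (fun n => by positivity) (summable_aux2 hT0 hT1)).subtype C.f.Dom
  exact this.congr fun p => rfl

/-! ### Basic facts about the Boltzmann factor -/

lemma boltz_pos (T : ℝ) (p : List Bool) : 0 < boltzmann T p :=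
  Real.rpow_pos_of_pos two_pos _

lemma boltz_mono (h1 : 0 < T₁) (h12 : T₁ ≤ T₂) (p : List Bool) :
    boltzmann T₁ p ≤ boltzmann T₂ p := by
  rw [boltzmann, boltzmann, Real.rpow_le_rpow_left_iff one_lt_two]
  rw [neg_div, neg_div, neg_le_neg_iff]
  gcongr

lemma boltz_strict_mono (h1 : 0 < T₁) (h12 : T₁ < T₂) {p : List Bool}
    (hp : p ≠ []) : boltzmann T₁ p < boltzmann T₂ p := by
  rw [boltzmann, boltzmann, Real.rpow_lt_rpow_left_iff one_lt_two]
  have hn : (0:ℝ) < p.length := by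
    have := List.length_pos_iff.mpr hp
    exact_mod_cast this
  rw [neg_div, neg_div, neg_lt_neg_iff]
  gcongr

lemma Zpos (hT0 : 0 < T) (hT1 : T < 1) : 0 < Zfun C T := by
  obtain ⟨p, hp⟩ := C.dom_nonempty
  exact Summable.tsum_pos (summableZ hT0 hT1) (fun q => (boltz_pos T _).le) ⟨p, hp⟩ (boltz_pos T _)

lemma phys_elts (hC : PhysicallyReasonable C) :
    ∃ p ∈ C.f.Dom, ∃ q ∈ C.f.Dom, q.length < p.length := by
  obtain ⟨p, hp, q, hq, hne⟩ := hC
  rcases Nat.lt_or_ge q.length p.length with h | h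
  · exact ⟨p, hp, q, hq, h⟩
  · exact ⟨q, hq, p, hp, lt_of_le_of_ne h hne⟩

/-! ### Z is strictly increasing -/

lemma Z_lt (hC : PhysicallyReasonable C) (h10 : 0 < T₁) (h12 : T₁ < T₂) (h21 : T₂ < 1) :
    Zfun C T₁ < Zfun C T₂ := by
  obtain ⟨p, hp, q, hq, hlen⟩ := phys_elts hC
  have hpne : p ≠ [] := by
    intro h; rw [h] at hlen; simp at hlen
  have h20 : 0 < T₂ := h10.trans h12
  have h11 : T₁ < 1 := h12.trans h21
  exact Summable.tsum_lt_tsum (i := (⟨p, hp⟩ : C.f.Dom)) (fun r => boltz_mono h10 h12.le r.1)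
    (boltz_strict_mono h10 h12 hpne) (summableZ h10 h11) (summableZ h20 h21)

/-! ### rpow subadditivity -/

lemma rpow_add_lt {x y r : ℝ} (hx : 0 < x) (hy : 0 < y) (hr0 : 0 < r) (hr1 : r < 1) :
    (x + y) ^ r < x ^ r + y ^ r := by
  have hxy : 0 < x + y := by linarith
  have hx1 : x ^ r = x * x ^ (r - 1) := by
    rw [← Real.rpow_one_add' hx.le (by intro h; exact hr0.ne' (by linarith))]
    ring_nf
  have hy1 : y ^ r = y * y ^ (r - 1) := by
    rw [← Real.rpow_one_add' hy.le (by intro h; exact hr0.ne' (by linarith))]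
    ring_nf
  have hxy1 : (x + y) ^ r = x * (x+y) ^ (r - 1) + y * (x+y) ^ (r-1) := by
    rw [← add_mul, ← Real.rpow_one_add' hxy.le (by intro h; exact hr0.ne' (by linarith))]
    ring_nf
  have h2 : (x+y) ^ (r-1) < x ^ (r-1) :=
    Real.rpow_lt_rpow_of_neg hx (lt_add_of_pos_right x hy) (by linarith)
  have h3 : (x+y) ^ (r-1) < y ^ (r-1) :=
    Real.rpow_lt_rpow_of_neg hy (lt_add_of_pos_left y hx) (by linarith)
  rw [hx1, hy1, hxy1]
  have := mul_lt_mul_of_pos_left h2 hx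
  have := mul_lt_mul_of_pos_left h3 hy
  linarith

lemma rpow_add_le {x y r : ℝ} (hx : 0 ≤ x) (hy : 0 ≤ y) (hr0 : 0 < r) (hr1 : r ≤ 1) :
    (x + y) ^ r ≤ x ^ r + y ^ r := by
  rcases eq_or_lt_of_le hx with h | h
  · simp [← h, Real.zero_rpow hr0.ne']
  rcases eq_or_lt_of_le hy with h' | h'
  · simp [← h', Real.zero_rpow hr0.ne']
  rcases eq_or_lt_of_le hr1 with h'' | h''
  · subst h''; simp
  · exact (rpow_add_lt h h' hr0 h'').le

lemma tsum_rpow_le {ι : Type*} {f : ι → ℝ} {r : ℝ} (hf : ∀ i, 0 ≤ f i) (hs : Summable f)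
    (hs2 : Summable fun i => f i ^ r) (hr0 : 0 < r) (hr1 : r ≤ 1) :
    (∑' i, f i) ^ r ≤ ∑' i, f i ^ r := by
  have hfin : ∀ s : Finset ι, (∑ i ∈ s, f i) ^ r ≤ ∑ i ∈ s, f i ^ r := by
    intro s
    induction s using Finset.cons_induction with
    | empty => simp [Real.zero_rpow hr0.ne']
    | cons a s ha ih =>
      rw [Finset.sum_cons, Finset.sum_cons]
      calc (f a + ∑ i ∈ s, f i) ^ r ≤ f a ^ r + (∑ i ∈ s, f i) ^ r :=
            rpow_add_le (hf a) (Finset.sum_nonneg fun i _ => hf i) hr0 hr1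
        _ ≤ f a ^ r + ∑ i ∈ s, f i ^ r := by linarith
  have hcont : Tendsto (fun s : Finset ι => (∑ i ∈ s, f i) ^ r) atTop
      (nhds ((∑' i, f i) ^ r)) :=
    ((Real.continuousAt_rpow_const _ _ (Or.inr hr0.le)).tendsto.comp hs.hasSum)
  exact le_of_tendsto hcont (Filter.Eventually.of_forall fun s =>
    (hfin s).trans (Summable.sum_le_tsum s (fun i _ => Real.rpow_nonneg (hf i) r) hs2))

/-! ### F is strictly decreasing -/

lemma F_lt (hC : PhysicallyReasonable C) (h10 : 0 < T₁) (h12 : T₁ < T₂) (h21 : T₂ < 1) :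
    Ffun C T₂ < Ffun C T₁ := by
  have h20 : 0 < T₂ := h10.trans h12
  have h11 : T₁ < 1 := h12.trans h21
  set r := T₁ / T₂ with hr
  have hr0 : 0 < r := by positivity
  have hr1 : r < 1 := (div_lt_one h20).mpr h12
  have hab : ∀ p : List Bool, boltzmann T₁ p ^ r = boltzmann T₂ p := by
    intro p
    rw [boltzmann, boltzmann, ← Real.rpow_mul (by norm_num)]
    congr 1
    rw [hr]
    field_simp
  obtain ⟨p, hp, q, hq, hlen⟩ := phys_elts hC
  set i₀ : C.f.Dom := ⟨p, hp⟩
  set j₀ : C.f.Dom := ⟨q, hq⟩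
  have hij : j₀ ≠ i₀ := fun h =>
    absurd (congrArg (fun s : C.f.Dom => s.1.length) h) hlen.ne
  set a : C.f.Dom → ℝ := fun s => boltzmann T₁ s.1 with ha
  set b : C.f.Dom → ℝ := fun s => boltzmann T₂ s.1 with hb
  have Sa : Summable a := summableZ h10 h11
  have Sb : Summable b := summableZ h20 h21
  set g : C.f.Dom → ℝ := fun s => if s = i₀ then 0 else a s with hg
  have hgnn : ∀ s, 0 ≤ g s := by
    intro s; rw [hg]; dsimp only; split
    · exact le_rfl
    · exact (boltz_pos _ _).le
  have Sg : Summable g := by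
    apply Summable.of_nonneg_of_le hgnn (fun s => ?_) Sa
    rw [hg]; dsimp only; split
    · exact (boltz_pos _ _).le
    · exact le_rfl
  have hgr : (fun s => g s ^ r) = fun s => if s = i₀ then 0 else b s := by
    funext s
    rw [hg]; dsimp only; split
    · exact Real.zero_rpow hr0.ne'
    · exact hab s.1
  have Sgb : Summable (fun s : C.f.Dom => if s = i₀ then 0 else b s) := by
    apply Summable.of_nonneg_of_le (fun s => ?_) (fun s => ?_) Sb
    · split
      · exact le_rfl
      · exact (boltz_pos _ _).le
    · split
      · exact (boltz_pos _ _).le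
      · exact le_rfl
  have hR : 0 < ∑' s, g s := by
    refine Summable.tsum_pos Sg hgnn j₀ ?_
    rw [hg]; dsimp only; rw [if_neg hij]
    exact boltz_pos _ _
  have key : Zfun C T₁ ^ r < Zfun C T₂ := by
    have e1 : Zfun C T₁ = a i₀ + ∑' s, g s := Summable.tsum_eq_add_tsum_ite Sa i₀
    have e2 : Zfun C T₂ = b i₀ + ∑' s, (if s = i₀ then 0 else b s) := Summable.tsum_eq_add_tsum_ite Sb i₀
    rw [e1, e2]
    calc (a i₀ + ∑' s, g s) ^ r
        < a i₀ ^ r + (∑' s, g s) ^ r := rpow_add_lt (boltz_pos _ _) hR hr0 hr1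
      _ ≤ b i₀ + ∑' s, (if s = i₀ then 0 else b s) := by
          have h2 : (∑' s, g s) ^ r ≤ ∑' s, g s ^ r :=
            tsum_rpow_le hgnn Sg (by rw [hgr]; exact Sgb) hr0 hr1.le
          rw [hgr] at h2
          have h3 : a i₀ ^ r = b i₀ := hab i₀.1
          linarith
  have hZ1 : 0 < Zfun C T₁ := Zpos h10 h11
  have hZ2 : 0 < Zfun C T₂ := Zpos h20 h21
  have hlog : r * Real.log (Zfun C T₁) < Real.log (Zfun C T₂) := by
    rw [← Real.log_rpow hZ1]
    exact Real.log_lt_log (Real.rpow_pos_of_pos hZ1 r) key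
  have hTL : T₁ * Real.log (Zfun C T₁) < T₂ * Real.log (Zfun C T₂) := by
    have := mul_lt_mul_of_pos_left hlog h20
    have he : T₂ * (r * Real.log (Zfun C T₁)) = T₁ * Real.log (Zfun C T₁) := by
      rw [hr]; field_simp
    linarith [he ▸ this]
  have hl2 : 0 < Real.log 2 := Real.log_pos one_lt_two
  rw [Ffun, Ffun, Real.logb, Real.logb]
  rw [neg_mul, neg_mul, neg_lt_neg_iff, ← mul_div_assoc, ← mul_div_assoc]
  gcongr

end StatMechAux

namespace StatMechAux2

open Filter Topology StatMechAux

variable {C : Computer} {T T₁ T₂ : ℝ}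

/-! ### E is strictly increasing -/

lemma cross_le (h10 : 0 < T₁) (h12 : T₁ ≤ T₂) {p q : List Bool} (hpq : q.length ≤ p.length) :
    boltzmann T₁ p * boltzmann T₂ q ≤ boltzmann T₂ p * boltzmann T₁ q := by
  have h20 : 0 < T₂ := lt_of_lt_of_le h10 h12
  rw [boltzmann, boltzmann, boltzmann, boltzmann, ← Real.rpow_add two_pos,
    ← Real.rpow_add two_pos, Real.rpow_le_rpow_left_iff one_lt_two, ← sub_nonneg]
  have hn : (q.length:ℝ) ≤ p.length := Nat.cast_le.mpr hpq
  have heq : (-(p.length:ℝ)/T₂ + -(q.length:ℝ)/T₁) - (-(p.length:ℝ)/T₁ + -(q.length:ℝ)/T₂)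
      = ((p.length:ℝ) - q.length) * (T₂ - T₁) / (T₁ * T₂) := by
    field_simp
    ring
  rw [heq]
  exact div_nonneg (mul_nonneg (by linarith) (by linarith)) (by positivity)

lemma cross_lt (h10 : 0 < T₁) (h12 : T₁ < T₂) {p q : List Bool} (hpq : q.length < p.length) :
    boltzmann T₁ p * boltzmann T₂ q < boltzmann T₂ p * boltzmann T₁ q := by
  have h20 : 0 < T₂ := h10.trans h12
  rw [boltzmann, boltzmann, boltzmann, boltzmann, ← Real.rpow_add two_pos,
    ← Real.rpow_add two_pos, Real.rpow_lt_rpow_left_iff one_lt_two, ← sub_pos]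
  have hn : (q.length:ℝ) < p.length := Nat.cast_lt.mpr hpq
  have heq : (-(p.length:ℝ)/T₂ + -(q.length:ℝ)/T₁) - (-(p.length:ℝ)/T₁ + -(q.length:ℝ)/T₂)
      = ((p.length:ℝ) - q.length) * (T₂ - T₁) / (T₁ * T₂) := by
    field_simp
    ring
  rw [heq]
  exact div_pos (mul_pos (by linarith) (by linarith)) (by positivity)

lemma pair_nonneg (h10 : 0 < T₁) (h12 : T₁ < T₂) (p q : List Bool) :
    0 ≤ ((p.length:ℝ) - q.length) *
      (boltzmann T₂ p * boltzmann T₁ q - boltzmann T₁ p * boltzmann T₂ q) := by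
  rcases le_total q.length p.length with h | h
  · have := cross_le h10 h12.le h
    have h1 : (q.length:ℝ) ≤ p.length := Nat.cast_le.mpr h
    apply mul_nonneg (by linarith) (by linarith)
  · have hcl := cross_le (T₁ := T₁) (T₂ := T₂) (p := q) (q := p) h10 h12.le h
    have h1 : (p.length:ℝ) ≤ q.length := Nat.cast_le.mpr h
    nlinarith [hcl]

lemma pair_pos (h10 : 0 < T₁) (h12 : T₁ < T₂) {p q : List Bool} (h : q.length < p.length) :
    0 < ((p.length:ℝ) - q.length) *
      (boltzmann T₂ p * boltzmann T₁ q - boltzmann T₁ p * boltzmann T₂ q) := by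
  have := cross_lt h10 h12 h
  have h1 : (q.length:ℝ) < p.length := Nat.cast_lt.mpr h
  apply mul_pos (by linarith) (by linarith)

lemma E_lt (hC : PhysicallyReasonable C) (h10 : 0 < T₁) (h12 : T₁ < T₂) (h21 : T₂ < 1) :
    Efun C T₁ < Efun C T₂ := by
  have h20 : 0 < T₂ := h10.trans h12
  have h11 : T₁ < 1 := h12.trans h21
  have hZ1 : 0 < Zfun C T₁ := Zpos h10 h11
  have hZ2 : 0 < Zfun C T₂ := Zpos h20 h21
  set ι := ↥C.f.Dom
  set a : ι → ℝ := fun s => boltzmann T₁ s.1 with ha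
  set b : ι → ℝ := fun s => boltzmann T₂ s.1 with hb
  set na : ι → ℝ := fun s => (s.1.length : ℝ) * boltzmann T₁ s.1 with hna
  set nb : ι → ℝ := fun s => (s.1.length : ℝ) * boltzmann T₂ s.1 with hnb
  have Sa : Summable a := summableZ h10 h11
  have Sb : Summable b := summableZ h20 h21
  have Sna : Summable na := summableE h10 h11
  have Snb : Summable nb := summableE h20 h21
  have Na : Summable fun s => ‖a s‖ := by simpa [Real.norm_eq_abs] using Sa.abs
  have Nb : Summable fun s => ‖b s‖ := by simpa [Real.norm_eq_abs] using Sb.abs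
  have Nna : Summable fun s => ‖na s‖ := by simpa [Real.norm_eq_abs] using Sna.abs
  have Nnb : Summable fun s => ‖nb s‖ := by simpa [Real.norm_eq_abs] using Snb.abs
  have P1 : Summable fun z : ι × ι => nb z.1 * a z.2 := summable_mul_of_summable_norm Nnb Na
  have P2 : Summable fun z : ι × ι => na z.1 * b z.2 := summable_mul_of_summable_norm Nna Nb
  have P3 : Summable fun z : ι × ι => b z.1 * na z.2 := summable_mul_of_summable_norm Nb Nna
  have P4 : Summable fun z : ι × ι => a z.1 * nb z.2 := summable_mul_of_summable_norm Na Nnb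
  have e1 : (∑' s, nb s) * (∑' s, a s) = ∑' z : ι × ι, nb z.1 * a z.2 :=
    tsum_mul_tsum_of_summable_norm Nnb Na
  have e2 : (∑' s, na s) * (∑' s, b s) = ∑' z : ι × ι, na z.1 * b z.2 :=
    tsum_mul_tsum_of_summable_norm Nna Nb
  have sw3 : ∑' z : ι × ι, b z.1 * na z.2 = ∑' z : ι × ι, na z.1 * b z.2 := by
    have h := (Equiv.prodComm ι ι).tsum_eq (fun z : ι × ι => na z.1 * b z.2)
    rw [← h]
    exact tsum_congr fun z => mul_comm _ _
  have sw4 : ∑' z : ι × ι, a z.1 * nb z.2 = ∑' z : ι × ι, nb z.1 * a z.2 := by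
    have h := (Equiv.prodComm ι ι).tsum_eq (fun z : ι × ι => nb z.1 * a z.2)
    rw [← h]
    exact tsum_congr fun z => mul_comm _ _
  set G : ι × ι → ℝ := fun z => ((z.1.1.length:ℝ) - z.2.1.length) *
      (b z.1 * a z.2 - a z.1 * b z.2) with hG
  have hGeq : ∀ z : ι × ι,
      G z = nb z.1 * a z.2 - na z.1 * b z.2 - b z.1 * na z.2 + a z.1 * nb z.2 := by
    intro z
    rw [hG, ha, hb, hna, hnb]
    dsimp only
    ring
  have SG : Summable G := (((P1.sub P2).sub P3).add P4).congr fun z => (hGeq z).symm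
  have hGsum : ∑' z, G z = (∑' z : ι × ι, nb z.1 * a z.2) - (∑' z : ι × ι, na z.1 * b z.2)
      - (∑' z : ι × ι, b z.1 * na z.2) + (∑' z : ι × ι, a z.1 * nb z.2) := by
    rw [tsum_congr hGeq, Summable.tsum_add ((P1.sub P2).sub P3) P4, Summable.tsum_sub (P1.sub P2) P3,
      Summable.tsum_sub P1 P2]
  obtain ⟨p, hp, q, hq, hlen⟩ := phys_elts hC
  have hGpos : 0 < ∑' z, G z := by
    refine Summable.tsum_pos SG (fun z => ?_) (⟨p, hp⟩, ⟨q, hq⟩) ?_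
    · rw [hG]; exact pair_nonneg h10 h12 z.1.1 z.2.1
    · rw [hG]; exact pair_pos h10 h12 hlen
  have hmain : (∑' s, na s) * (∑' s, b s) < (∑' s, nb s) * (∑' s, a s) := by
    rw [e1, e2]
    rw [hGsum, sw3, sw4] at hGpos
    linarith
  have hE1 : Efun C T₁ = (∑' s, na s) / (∑' s, a s) := by
    rw [Efun, inv_mul_eq_div]; rfl
  have hE2 : Efun C T₂ = (∑' s, nb s) / (∑' s, b s) := by
    rw [Efun, inv_mul_eq_div]; rfl
  have hZa : Zfun C T₁ = ∑' s, a s := rfl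
  have hZb : Zfun C T₂ = ∑' s, b s := rfl
  rw [hE1, hE2, div_lt_div_iff₀ (hZa ▸ hZ1) (hZb ▸ hZ2)]
  exact hmain

/-! ### S is strictly increasing -/

lemma star_ineq (h10 : 0 < T₁) (h12 : T₁ < T₂) (h21 : T₂ < 1) :
    Efun C T₁ * (1/T₁ - 1/T₂) ≤ Real.logb 2 (Zfun C T₂) - Real.logb 2 (Zfun C T₁) := by
  have h20 : 0 < T₂ := h10.trans h12
  have h11 : T₁ < 1 := h12.trans h21
  have hZ1 : 0 < Zfun C T₁ := Zpos h10 h11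
  have hZ2 : 0 < Zfun C T₂ := Zpos h20 h21
  have Sa : Summable (fun s : C.f.Dom => boltzmann T₁ s.1) := summableZ h10 h11
  have Sb : Summable (fun s : C.f.Dom => boltzmann T₂ s.1) := summableZ h20 h21
  have Sna : Summable (fun s : C.f.Dom => (s.1.length:ℝ) * boltzmann T₁ s.1) :=
    summableE h10 h11
  set δ := 1/T₁ - 1/T₂ with hδ
  set E₁ := Efun C T₁ with hE₁
  set k := (2:ℝ) ^ (E₁ * δ) with hk
  have hkpos : 0 < k := Real.rpow_pos_of_pos two_pos _
  have hlog2 : 0 < Real.log 2 := Real.log_pos one_lt_two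
  have term : ∀ s : C.f.Dom, (k - k * (δ * Real.log 2) * E₁) * boltzmann T₁ s.1
      + (k * (δ * Real.log 2)) * ((s.1.length:ℝ) * boltzmann T₁ s.1) ≤ boltzmann T₂ s.1 := by
    intro s
    set n : ℝ := (s.1.length : ℝ) with hn
    have hb2 : boltzmann T₂ s.1 = boltzmann T₁ s.1 * ((2:ℝ) ^ ((n - E₁) * δ) * k) := by
      rw [boltzmann, boltzmann, hk, ← Real.rpow_add two_pos, ← Real.rpow_add two_pos]
      congr 1
      rw [hδ, ← hn]
      field_simp
      ring
    have htan : 1 + (n - E₁) * δ * Real.log 2 ≤ (2:ℝ) ^ ((n - E₁) * δ) := by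
      rw [Real.rpow_def_of_pos two_pos]
      have h := Real.add_one_le_exp (Real.log 2 * ((n - E₁) * δ))
      linarith
    have hbpos := boltz_pos T₁ s.1
    calc (k - k * (δ * Real.log 2) * E₁) * boltzmann T₁ s.1
          + (k * (δ * Real.log 2)) * (n * boltzmann T₁ s.1)
        = boltzmann T₁ s.1 * ((1 + (n - E₁) * δ * Real.log 2) * k) := by ring
      _ ≤ boltzmann T₁ s.1 * ((2:ℝ) ^ ((n - E₁) * δ) * k) := by
          apply mul_le_mul_of_nonneg_left _ hbpos.le
          exact mul_le_mul_of_nonneg_right htan hkpos.le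
      _ = boltzmann T₂ s.1 := hb2.symm
  have hsum : (k - k * (δ * Real.log 2) * E₁) * Zfun C T₁
      + (k * (δ * Real.log 2)) * (∑' s : C.f.Dom, (s.1.length:ℝ) * boltzmann T₁ s.1)
      ≤ Zfun C T₂ := by
    have h := Summable.tsum_le_tsum term ((Sa.mul_left _).add (Sna.mul_left _)) Sb
    rwa [Summable.tsum_add (Sa.mul_left _) (Sna.mul_left _), tsum_mul_left, tsum_mul_left] at h
  have hP : (∑' s : C.f.Dom, (s.1.length:ℝ) * boltzmann T₁ s.1) = E₁ * Zfun C T₁ := by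
    rw [hE₁, Efun]
    field_simp
  rw [hP] at hsum
  have hkZ : k * Zfun C T₁ ≤ Zfun C T₂ := by
    have heq : (k - k * (δ * Real.log 2) * E₁) * Zfun C T₁
        + (k * (δ * Real.log 2)) * (E₁ * Zfun C T₁) = k * Zfun C T₁ := by ring
    linarith
  have hlogle : Real.log (k * Zfun C T₁) ≤ Real.log (Zfun C T₂) :=
    Real.log_le_log (by positivity) hkZ
  rw [Real.log_mul hkpos.ne' hZ1.ne', hk, Real.log_rpow two_pos] at hlogle
  rw [Real.logb, Real.logb, ← sub_div, le_div_iff₀ hlog2]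
  linarith

lemma S_lt (hC : PhysicallyReasonable C) (h10 : 0 < T₁) (h12 : T₁ < T₂) (h21 : T₂ < 1) :
    Sfun C T₁ < Sfun C T₂ := by
  have h20 : 0 < T₂ := h10.trans h12
  have hE := E_lt hC h10 h12 h21
  have hstar := star_ineq (C := C) h10 h12 h21
  have hform : ∀ T : ℝ, T ≠ 0 → Sfun C T = Efun C T / T + Real.logb 2 (Zfun C T) := by
    intro T hT
    rw [Sfun, Ffun]
    field_simp
    ring
  rw [hform T₁ h10.ne', hform T₂ h20.ne']
  have e1 : Efun C T₁ * (1/T₁ - 1/T₂) = Efun C T₁/T₁ - Efun C T₁/T₂ := by ring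
  have e2 : 0 < (Efun C T₂ - Efun C T₁)/T₂ := div_pos (by linarith) h20
  have e3 : (Efun C T₂ - Efun C T₁)/T₂ = Efun C T₂/T₂ - Efun C T₁/T₂ := by ring
  linarith

end StatMechAux2

/-- For a physically reasonable computer `C`, the maps
`T ↦ Z_C(T)`, `T ↦ E_C(T)`, `T ↦ S_C(T)` are increasing on `(0,1)` and
`T ↦ F_C(T)` is decreasing on `(0,1)`. -/
theorem thermodynamic_quantities_monotone (C : Computer)
    (hC : PhysicallyReasonable C) :
    StrictMonoOn (Zfun C) (Set.Ioo 0 1) ∧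
    StrictMonoOn (Efun C) (Set.Ioo 0 1) ∧
    StrictMonoOn (Sfun C) (Set.Ioo 0 1) ∧
    StrictAntiOn (Ffun C) (Set.Ioo 0 1) := by
  refine ⟨?_, ?_, ?_, ?_⟩
  · intro T₁ h₁ T₂ h₂ h12
    exact StatMechAux.Z_lt hC h₁.1 h12 h₂.2
  · intro T₁ h₁ T₂ h₂ h12
    exact StatMechAux2.E_lt hC h₁.1 h12 h₂.2
  · intro T₁ h₁ T₂ h₂ h12
    exact StatMechAux2.S_lt hC h₁.1 h12 h₂.2
  · intro T₁ h₁ T₂ h₂ h12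
    exact StatMechAux.F_lt hC h₁.1 h12 h₂.2
end
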